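/- Let a, b ∈ H² with Re(a) ≠ Re(b). Then (|a⋆ − b|·|a − b⋆|) / (|a⋆ − a|·|b − b⋆|) = (|a − conj(b)| + |a − b|) / (|a − conj(b)| − |a − b|). -/

import Mathlib

open Complex ComplexConjugate

/-! The hyperbolic line through `a` and `b` is the semicircle with real centre
`c = (|a|² - |b|²) / (2 Re(a - b))` and signed radius `R = |a - b| |a - b̄| / (2 Re(a - b))`,
so that `a⋆ = c + R` and `b⋆ = c - R`. For `z` on this circle `|z - (c ± R)|² = 2R(R ∓ (Re z - c))`,
so both sides of the cross ratio are `4R²` times a product of two linear factors. These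
products equal `(|a - b̄| ± |a - b|)² / 4`, because `2R Re(a - b) = |a - b| |a - b̄|` and
`4(R² - (Re a - c)(Re b - c)) = |a - b|² + |a - b̄|²`. -/

lemma Complex.sq_norm_eq_re_sq_add_im_sq (z : ℂ) : ‖z‖ ^ 2 = z.re ^ 2 + z.im ^ 2 := by
  rw [Complex.sq_norm, Complex.normSq_apply]; ring

lemma Complex.sq_norm_sub_conj (a b : ℂ) :
    ‖a - conj b‖ ^ 2 = (a.re - b.re) ^ 2 + (a.im + b.im) ^ 2 := by
  rw [Complex.sq_norm_eq_re_sq_add_im_sq]; simp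

lemma Complex.sq_norm_sub (a b : ℂ) :
    ‖a - b‖ ^ 2 = (a.re - b.re) ^ 2 + (a.im - b.im) ^ 2 := by
  rw [Complex.sq_norm_eq_re_sq_add_im_sq]; simp

lemma Complex.norm_sub_le_norm_sub_conj {a b : ℂ} (h : 0 ≤ a.im * b.im) :
    ‖a - b‖ ≤ ‖a - conj b‖ := by
  rw [← pow_le_pow_iff_left₀ (norm_nonneg _) (norm_nonneg _) two_ne_zero,
    Complex.sq_norm_sub, Complex.sq_norm_sub_conj]
  nlinarith

section Circle

variable {a b z : ℂ} {c R : ℝ}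

lemma sq_norm_sub_ofReal_add (hz : ‖z - c‖ = |R|) :
    ‖z - ((c + R : ℝ) : ℂ)‖ ^ 2 = 2 * R * (R - (z.re - c)) := by
  have hz2 := congrArg (· ^ 2) hz
  simp only [sq_abs, Complex.sq_norm_eq_re_sq_add_im_sq, sub_re, sub_im, ofReal_re,
    ofReal_im, sub_zero] at hz2 ⊢
  linear_combination hz2

lemma four_mul_sq_sub_mul (ha : ‖a - c‖ = |R|) (hb : ‖b - c‖ = |R|) :
    4 * (R ^ 2 - (a.re - c) * (b.re - c)) = ‖a - b‖ ^ 2 + ‖a - conj b‖ ^ 2 := by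
  have ha2 := congrArg (· ^ 2) ha
  have hb2 := congrArg (· ^ 2) hb
  simp only [sq_abs, Complex.sq_norm_eq_re_sq_add_im_sq, sub_re, sub_im, ofReal_re,
    ofReal_im, sub_zero] at ha2 hb2
  rw [Complex.sq_norm_sub, Complex.sq_norm_sub_conj]
  linear_combination -2 * ha2 - 2 * hb2

lemma norm_ofReal_add_sub_mul_norm_sub_ofReal_sub_eq_abs_mul_add
    (ha : ‖a - c‖ = |R|) (hb : ‖b - c‖ = |R|)
    (hR : 2 * R * (a.re - b.re) = ‖a - b‖ * ‖a - conj b‖) :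
    ‖((c + R : ℝ) : ℂ) - b‖ * ‖a - ((c - R : ℝ) : ℂ)‖ = |R| * (‖a - conj b‖ + ‖a - b‖) := by
  rw [← sq_eq_sq₀ (by positivity) (by positivity), mul_pow, norm_sub_rev, sub_eq_add_neg c,
    sq_norm_sub_ofReal_add hb, sq_norm_sub_ofReal_add (R := -R) (by rwa [abs_neg]), mul_pow,
    sq_abs]
  linear_combination R ^ 2 * four_mul_sq_sub_mul ha hb + 2 * R ^ 2 * hR

lemma norm_ofReal_add_sub_mul_norm_sub_ofReal_sub_eq_abs_mul_sub
    (ha : ‖a - c‖ = |R|) (hb : ‖b - c‖ = |R|)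
    (hR : 2 * R * (a.re - b.re) = ‖a - b‖ * ‖a - conj b‖) (hab : ‖a - b‖ ≤ ‖a - conj b‖) :
    ‖((c + R : ℝ) : ℂ) - a‖ * ‖b - ((c - R : ℝ) : ℂ)‖ = |R| * (‖a - conj b‖ - ‖a - b‖) := by
  have : 0 ≤ ‖a - conj b‖ - ‖a - b‖ := sub_nonneg.mpr hab
  rw [← sq_eq_sq₀ (by positivity) (by positivity), mul_pow, norm_sub_rev, sub_eq_add_neg c,
    sq_norm_sub_ofReal_add ha, sq_norm_sub_ofReal_add (R := -R) (by rwa [abs_neg]), mul_pow,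
    sq_abs]
  linear_combination R ^ 2 * four_mul_sq_sub_mul ha hb - 2 * R ^ 2 * hR

end Circle

noncomputable def geodesicCenter (a b : ℂ) : ℝ := (‖a‖ ^ 2 - ‖b‖ ^ 2) / (2 * (a - b).re)

noncomputable def geodesicRadius (a b : ℂ) : ℝ := ‖a - b‖ * ‖a - conj b‖ / (2 * (a - b).re)

section Geodesic

variable {a b : ℂ}

lemma two_mul_geodesicRadius_mul (h : a.re ≠ b.re) :
    2 * geodesicRadius a b * (a.re - b.re) = ‖a - b‖ * ‖a - conj b‖ := by
  have : a.re - b.re ≠ 0 := sub_ne_zero.mpr h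
  rw [geodesicRadius, sub_re]
  field_simp

lemma geodesicRadius_ne_zero (h : a.re ≠ b.re) : geodesicRadius a b ≠ 0 := by
  have hab : a - b ≠ 0 := sub_ne_zero.mpr fun h' => h (by rw [h'])
  have habc : a - conj b ≠ 0 := sub_ne_zero.mpr fun h' => h (by rw [h', conj_re])
  have hre : (a - b).re ≠ 0 := by rw [sub_re, sub_ne_zero]; exact h
  unfold geodesicRadius
  positivity

lemma sq_geodesicRadius :
    geodesicRadius a b ^ 2 =
      ((a.re - b.re) ^ 2 + (a.im - b.im) ^ 2) * ((a.re - b.re) ^ 2 + (a.im + b.im) ^ 2) /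
        (2 * (a.re - b.re)) ^ 2 := by
  rw [geodesicRadius, div_pow, mul_pow, Complex.sq_norm_sub, Complex.sq_norm_sub_conj, sub_re]

lemma norm_sub_geodesicCenter_left (h : a.re ≠ b.re) :
    ‖a - geodesicCenter a b‖ = |geodesicRadius a b| := by
  have : a.re - b.re ≠ 0 := sub_ne_zero.mpr h
  rw [← sq_eq_sq₀ (norm_nonneg _) (abs_nonneg _), sq_abs, sq_geodesicRadius,
    Complex.sq_norm_eq_re_sq_add_im_sq, geodesicCenter, Complex.sq_norm_eq_re_sq_add_im_sq,
    Complex.sq_norm_eq_re_sq_add_im_sq]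
  simp only [sub_re, sub_im, ofReal_re, ofReal_im, sub_zero]
  field_simp
  ring

lemma norm_sub_geodesicCenter_right (h : a.re ≠ b.re) :
    ‖b - geodesicCenter a b‖ = |geodesicRadius a b| := by
  have : a.re - b.re ≠ 0 := sub_ne_zero.mpr h
  rw [← sq_eq_sq₀ (norm_nonneg _) (abs_nonneg _), sq_abs, sq_geodesicRadius,
    Complex.sq_norm_eq_re_sq_add_im_sq, geodesicCenter, Complex.sq_norm_eq_re_sq_add_im_sq,
    Complex.sq_norm_eq_re_sq_add_im_sq]
  simp only [sub_re, sub_im, ofReal_re, ofReal_im, sub_zero]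
  field_simp
  ring

end Geodesic

theorem cross_ratio_endpoints (a b : ℂ) (hia : 0 < a.im) (hib : 0 < b.im)
    (hre : a.re ≠ b.re)
    (astar bstar : ℝ)
    (hastar : astar = (‖a‖ ^ 2 - ‖b‖ ^ 2 +
        ‖a - b‖ * ‖a - conj b‖) / (2 * (a - b).re))
    (hbstar : bstar = (‖a‖ ^ 2 - ‖b‖ ^ 2 -
        ‖a - b‖ * ‖a - conj b‖) / (2 * (a - b).re)) :
    (‖(astar : ℂ) - b‖ * ‖a - (bstar : ℂ)‖) /
      (‖(astar : ℂ) - a‖ * ‖b - (bstar : ℂ)‖) =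
    (‖a - conj b‖ + ‖a - b‖) /
      (‖a - conj b‖ - ‖a - b‖) := by
  have hastar' : astar = geodesicCenter a b + geodesicRadius a b := by
    rw [hastar, geodesicCenter, geodesicRadius, add_div]
  have hbstar' : bstar = geodesicCenter a b - geodesicRadius a b := by
    rw [hbstar, geodesicCenter, geodesicRadius, sub_div]
  have ha := norm_sub_geodesicCenter_left hre
  have hb := norm_sub_geodesicCenter_right hre
  have hR := two_mul_geodesicRadius_mul hre
  rw [hastar', hbstar', norm_ofReal_add_sub_mul_norm_sub_ofReal_sub_eq_abs_mul_add ha hb hR,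
    norm_ofReal_add_sub_mul_norm_sub_ofReal_sub_eq_abs_mul_sub ha hb hR
      (norm_sub_le_norm_sub_conj (mul_pos hia hib).le),
    mul_div_mul_left _ _ (abs_ne_zero.mpr (geodesicRadius_ne_zero hre))]
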